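/- The newly inserted node has no outgoing reversed suffix link: when PPH(T[i..]) is updated to PPH(T[i−1..]) by inserting node v_{i−1} with id(v_{i−1}) = i−1, there is no node w in PPH(T[i−1..]) and character a such that rslink(a, v_{i−1}) = w. -/

import Mathlib

open List

variable {α : Type} [DecidableEq α]

/-- The previous encoding entry at (0-based) position `i` of a p-string `S`,
over static alphabet `Sig`. -/
def prevEncAt (Sig : Set α) [DecidablePred (· ∈ Sig)] (S : List α) (i : ℕ) : α ⊕ ℕ :=
  match S[i]? with
  | none => Sum.inr 0
  | some c =>
    if c ∈ Sig then Sum.inl c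
    else if (List.range i).any (fun j => decide (S[j]? = some c)) then
      Sum.inr (i - Nat.findGreatest (fun j => S[j]? = some c) (i - 1))
    else Sum.inr 0

/-- The previous encoding of a p-string `S`. -/
def prevEnc (Sig : Set α) [DecidablePred (· ∈ Sig)] (S : List α) : List (α ⊕ ℕ) :=
  (List.range S.length).map (prevEncAt Sig S)

/-- Two p-strings parameterized match: equal length and a bijection on characters
fixing the static alphabet pointwise maps one onto the other. -/
def PMatch (Sig : Set α) (X Y : List α) : Prop :=
  X.length = Y.length ∧ ∃ f : α ≃ α, (∀ a ∈ Sig, f a = a) ∧ X.map f = Y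

/-- Length of the shortest prefix of `S` not yet a node of `N`
(defaults to `S.length` if all prefixes are nodes). -/
def insLen {β : Type} [DecidableEq β] (N : Finset (List β)) (S : List β) : ℕ :=
  (((List.range (S.length + 1)).filter (fun m => decide (S.take m ∉ N))).head?).getD S.length

/-- The node set of the sequence hash tree of a sequence of strings,
built incrementally: each step inserts the shortest prefix of the current
string that is not yet a node. -/
def SHTNodes {β : Type} [DecidableEq β] (L : List (List β)) : Finset (List β) :=
  L.foldl (fun N S => insert (S.take (insLen N S)) N) ∅

/-- The sequence ⟨ε, prev(T[n..]), ..., prev(T[1..])⟩ of previous-encoded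
suffixes of `T` in increasing length order. -/
def pphSeq (Sig : Set α) [DecidablePred (· ∈ Sig)] (T : List α) : List (List (α ⊕ ℕ)) :=
  [] :: (List.range T.length).map (fun k => prevEnc Sig (T.drop (T.length - 1 - k)))

/-- The node set of the parameterized position heap `PPH(T)`. -/
def pphNodes (Sig : Set α) [DecidablePred (· ∈ Sig)] (T : List α) : Finset (List (α ⊕ ℕ)) :=
  SHTNodes (pphSeq Sig T)

/-- `a ∈ Σ ∪ {0}` as a character of a previous encoding. -/
def StaticOrZero (Sig : Set α) (a : α ⊕ ℕ) : Prop :=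
  (∃ c ∈ Sig, a = Sum.inl c) ∨ a = Sum.inr 0

/-- Reversed suffix link `rslink(a, v) = u` in a position heap with node set `N`
for a text of length `n`. -/
def RSLink (Sig : Set α) (n : ℕ) (N : Finset (List (α ⊕ ℕ)))
    (a : α ⊕ ℕ) (v u : List (α ⊕ ℕ)) : Prop :=
  v ∈ N ∧ u ∈ N ∧
    ((StaticOrZero Sig a ∧ u = a :: v) ∨
     (∃ d : ℕ, a = Sum.inr d ∧ 1 ≤ d ∧ d ≤ n - 1 ∧ v[d - 1]? = some (Sum.inr 0) ∧
       u = Sum.inr 0 :: (v.take (d - 1) ++ [Sum.inr d] ++ v.drop d)))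

/-!
If `rslink(a, v) = w`, then deleting the first character of `w` and re-encoding gives back `v`
(`RSLink.prevEncTail_eq`). So it suffices that this operation maps every node of `PPH(c :: S)` into
`PPH(S)`, since the newly inserted node is not in `PPH(S)`.

That is proved by induction on `S`. Let `prev(c :: S)[..ℓ]` be the node inserted last and
`prev(S)[..ℓ']` the node inserted into `PPH(S)` before it. If `ℓ - 1 ≤ ℓ'`, the image of the new node
is a prefix of the latter. Otherwise `prev(c :: S)[..ℓ' + 1]` is an older node of `PPH(S)`, hence a
node of `PPH(S.tail)`, and by induction its image `prev(S)[..ℓ']` is a node of `PPH(S.tail)`,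
contradicting the choice of `ℓ'`.
-/

lemma Nat.findGreatest_succ_eq_findGreatest_add_one {P : ℕ → Prop} [DecidablePred P] {n : ℕ}
    (h : ∃ j ≤ n, P (j + 1)) :
    Nat.findGreatest P (n + 1) = Nat.findGreatest (fun j => P (j + 1)) n + 1 := by
  induction n with
  | zero => simp [show P 1 by simpa using h]
  | succ n ih =>
    by_cases hP : P (n + 1 + 1)
    · rw [Nat.findGreatest_eq hP, Nat.findGreatest_eq (P := fun j => P (j + 1)) hP]
    · obtain ⟨j, hjn, hj⟩ := h
      have hjn' : j ≤ n := Nat.le_of_lt_succ (lt_of_le_of_ne hjn (by rintro rfl; exact hP hj))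
      rw [Nat.findGreatest_of_not hP, Nat.findGreatest_of_not (P := fun j => P (j + 1)) hP]
      exact ih ⟨j, hjn', hj⟩

section Insertion

variable {β : Type} [DecidableEq β] (N : Finset (List β)) (S : List β)

lemma insLen_le : insLen N S ≤ S.length := by
  unfold insLen
  rw [List.head?_filter]
  cases h : (List.range (S.length + 1)).find? _ with
  | none => rfl
  | some i => simpa [Nat.lt_succ_iff] using (List.find?_range_eq_some.mp h).2.1

lemma take_mem_of_lt_insLen {m : ℕ} (hm : m < insLen N S) : S.take m ∈ N := by
  unfold insLen at hm
  rw [List.head?_filter] at hm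
  cases h : (List.range (S.length + 1)).find? (fun m => decide (S.take m ∉ N)) with
  | none =>
    rw [h, Option.getD_none] at hm
    simpa using List.find?_eq_none.mp h m (by simp; omega)
  | some i =>
    rw [h, Option.getD_some] at hm
    simpa using (List.find?_range_eq_some.mp h).2.2 m hm

lemma take_insLen_not_mem (hS : S ∉ N) : S.take (insLen N S) ∉ N := by
  unfold insLen
  rw [List.head?_filter]
  cases h : (List.range (S.length + 1)).find? (fun m => decide (S.take m ∉ N)) with
  | none => simpa using hS
  | some i => simpa using (List.find?_range_eq_some.mp h).1

end Insertion

def PointersInBounds {γ : Type} (v : List (γ ⊕ ℕ)) : Prop :=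
  ∀ k e : ℕ, v[k]? = some (Sum.inr e) → e ≤ k

lemma PointersInBounds.take {γ : Type} {v : List (γ ⊕ ℕ)} (hv : PointersInBounds v) (m : ℕ) :
    PointersInBounds (v.take m) := by
  intro k e h
  rw [List.getElem?_take] at h
  split_ifs at h
  exact hv k e h

-- `prevEncTail (prev X) = prev X.tail`: a pointer `k + 1` at position `k + 1` pointed at the dropped
-- first character.
def prevEncTail (w : List (α ⊕ ℕ)) : List (α ⊕ ℕ) :=
  w.tail.mapIdx fun k x => if x = Sum.inr (k + 1) then Sum.inr 0 else x

lemma prevEncTail_take (w : List (α ⊕ ℕ)) (m : ℕ) :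
    prevEncTail (w.take m) = (prevEncTail w).take (m - 1) := by
  unfold prevEncTail
  rw [List.tail_take_eq_take_tail]
  apply List.ext_getElem (by simp)
  intro k _ _
  simp

lemma prevEncTail_cons {v : List (α ⊕ ℕ)} (hv : PointersInBounds v) (a : α ⊕ ℕ) :
    prevEncTail (a :: v) = v := by
  apply List.ext_getElem (by simp [prevEncTail])
  intro k _ hk
  simp only [prevEncTail, List.tail_cons, List.getElem_mapIdx]
  rw [if_neg]
  intro h
  have := hv k (k + 1) (by simp [hk, h])
  omega

lemma prevEncTail_zero_cons_set {v : List (α ⊕ ℕ)} (hv : PointersInBounds v) {d : ℕ}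
    (hd : 1 ≤ d) (h0 : v[d - 1]? = some (Sum.inr 0)) :
    prevEncTail (Sum.inr 0 :: (v.take (d - 1) ++ [Sum.inr d] ++ v.drop d)) = v := by
  have hdv : d - 1 < v.length := by
    by_contra h
    simp [List.getElem?_eq_none (not_lt.mp h)] at h0
  have hset : v.take (d - 1) ++ [Sum.inr d] ++ v.drop d = v.set (d - 1) (Sum.inr d) := by
    rw [List.set_eq_take_append_cons_drop, if_pos hdv, show d - 1 + 1 = d by omega]
    simp
  rw [hset]
  apply List.ext_getElem (by simp [prevEncTail])
  intro k _ hk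
  simp only [prevEncTail, List.tail_cons, List.getElem_mapIdx, List.getElem_set]
  split_ifs with hkd hdk hvk
  · subst hkd
    simpa [hk] using h0.symm
  · exact absurd (congrArg Sum.inr (by omega)) hdk
  · have := hv k (k + 1) (by simp [hk, hvk])
    omega
  · rfl

lemma RSLink.prevEncTail_eq {Sig : Set α} {n : ℕ} {N : Finset (List (α ⊕ ℕ))} {a : α ⊕ ℕ}
    {v w : List (α ⊕ ℕ)} (h : RSLink Sig n N a v w) (hv : PointersInBounds v) :
    prevEncTail w = v := by
  obtain ⟨-, -, ⟨-, rfl⟩ | ⟨d, -, hd, -, h0, rfl⟩⟩ := h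
  · exact prevEncTail_cons hv a
  · exact prevEncTail_zero_cons_set hv hd h0

section Encoding

variable (Sig : Set α) [DecidablePred (· ∈ Sig)]

lemma prevEnc_length (S : List α) : (prevEnc Sig S).length = S.length := by
  simp [prevEnc]

lemma prevEncAt_inr_le (S : List α) (k d : ℕ) (h : prevEncAt Sig S k = Sum.inr d) : d ≤ k := by
  unfold prevEncAt at h
  split at h
  · cases h; omega
  · split_ifs at h <;> cases h <;> omega

lemma pointersInBounds_prevEnc (S : List α) : PointersInBounds (prevEnc Sig S) := by
  intro k e h
  rw [prevEnc, List.getElem?_map] at h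
  rcases lt_or_ge k S.length with hk | hk
  · rw [List.getElem?_range hk] at h
    exact prevEncAt_inr_le Sig S k e (Option.some.inj h)
  · simp [hk] at h

lemma prevEncAt_cons_succ (s : α) (S : List α) (k : ℕ) :
    prevEncAt Sig S k =
      if prevEncAt Sig (s :: S) (k + 1) = Sum.inr (k + 1) then Sum.inr 0
      else prevEncAt Sig (s :: S) (k + 1) := by
  unfold prevEncAt
  rw [List.getElem?_cons_succ]
  rcases hc : S[k]? with _ | c
  · simp
  by_cases hcSig : c ∈ Sig
  · simp [hcSig]
  simp only [hcSig, if_false, List.any_eq_true, List.mem_range, decide_eq_true_eq,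
    Nat.add_sub_cancel]
  by_cases hS : ∃ j < k, S[j]? = some c
  · obtain ⟨j, hjk, hj⟩ := hS
    have hshift := Nat.findGreatest_succ_eq_findGreatest_add_one
      (P := fun j => (s :: S)[j]? = some c) (n := k - 1) ⟨j, by omega, by simpa using hj⟩
    simp only [List.getElem?_cons_succ, show k - 1 + 1 = k by omega] at hshift
    have hle := Nat.findGreatest_le (P := fun j => S[j]? = some c) (k - 1)
    have hsc : ∃ x < k + 1, (s :: S)[x]? = some c := ⟨j + 1, by omega, by simpa using hj⟩
    rw [if_pos ⟨j, hjk, hj⟩, if_pos hsc, hshift, if_neg (by simp; omega)]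
    congr 1
    omega
  rw [if_neg hS]
  by_cases hs : s = c
  · subst hs
    have hzero : Nat.findGreatest (fun j => (s :: S)[j]? = some s) k = 0 := by
      refine Nat.findGreatest_eq_zero_iff.mpr fun n hn hnk hP => hS ?_
      obtain ⟨m, rfl⟩ : ∃ m, n = m + 1 := ⟨n - 1, by omega⟩
      exact ⟨m, by omega, by simpa using hP⟩
    have hsc : ∃ x < k + 1, (s :: S)[x]? = some s := ⟨0, by omega, rfl⟩
    rw [if_pos hsc, hzero, Nat.sub_zero, if_pos rfl]
  · have hsc : ¬ ∃ x < k + 1, (s :: S)[x]? = some c := by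
      rintro ⟨_ | m, hm, hmc⟩
      · exact hs (by simpa using hmc)
      · exact hS ⟨m, by omega, by simpa using hmc⟩
    rw [if_neg hsc, if_neg (by simp)]

lemma prevEncTail_prevEnc (S : List α) : prevEncTail (prevEnc Sig S) = prevEnc Sig S.tail := by
  cases S with
  | nil => rfl
  | cons s S =>
    apply List.ext_getElem (by simp [prevEncTail, prevEnc_length])
    intro k _ _
    simp [prevEncTail, prevEnc, prevEncAt_cons_succ Sig s S k]

end Encoding

section Heap

variable (Sig : Set α) [DecidablePred (· ∈ Sig)]

-- The node `v_{i-1}` of the paper, with `c :: S = T[i-1..]`.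
def pphNewNode (c : α) (S : List α) : List (α ⊕ ℕ) :=
  (prevEnc Sig (c :: S)).take (insLen (pphNodes Sig S) (prevEnc Sig (c :: S)))

lemma pphSeq_cons (c : α) (S : List α) :
    pphSeq Sig (c :: S) = pphSeq Sig S ++ [prevEnc Sig (c :: S)] := by
  unfold pphSeq
  rw [List.length_cons, List.range_succ, List.map_append, List.cons_append]
  congr 2
  · refine List.map_congr_left fun k hk => ?_
    rw [List.mem_range] at hk
    rw [show S.length + 1 - 1 - k = (S.length - 1 - k) + 1 by omega, List.drop_succ_cons]
  · simp

lemma pphNodes_nil : pphNodes Sig [] = {[]} := by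
  simp [pphNodes, pphSeq, SHTNodes]

lemma pphNodes_cons (c : α) (S : List α) :
    pphNodes Sig (c :: S) = insert (pphNewNode Sig c S) (pphNodes Sig S) := by
  rw [pphNodes, SHTNodes, pphSeq_cons, List.foldl_append]
  rfl

lemma pphNodes_tail_subset (S : List α) : pphNodes Sig S.tail ⊆ pphNodes Sig S := by
  cases S with
  | nil => rfl
  | cons c S => simp [pphNodes_cons]

lemma nil_mem_pphNodes (S : List α) : [] ∈ pphNodes Sig S := by
  induction S with
  | nil => simp [pphNodes_nil]
  | cons c S ih => exact pphNodes_tail_subset Sig (c :: S) ih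

lemma length_le_of_mem_pphNodes {S : List α} {w : List (α ⊕ ℕ)} (hw : w ∈ pphNodes Sig S) :
    w.length ≤ S.length := by
  induction S generalizing w with
  | nil => simp_all [pphNodes_nil]
  | cons c S ih =>
    rw [pphNodes_cons, Finset.mem_insert] at hw
    rcases hw with rfl | hw
    · simp [pphNewNode, prevEnc_length]
    · exact (ih hw).trans (Nat.le_succ _)

lemma take_mem_pphNodes {S : List α} {w : List (α ⊕ ℕ)} (hw : w ∈ pphNodes Sig S) (m : ℕ) :
    w.take m ∈ pphNodes Sig S := by
  induction S generalizing w with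
  | nil => simp_all [pphNodes_nil]
  | cons c S ih =>
    rw [pphNodes_cons, Finset.mem_insert] at hw ⊢
    rcases hw with rfl | hw
    · rw [pphNewNode, List.take_take]
      rcases le_or_gt (insLen (pphNodes Sig S) (prevEnc Sig (c :: S))) m with hm | hm
      · exact Or.inl (by rw [min_eq_right hm])
      · exact Or.inr (by rw [min_eq_left hm.le]; exact take_mem_of_lt_insLen _ _ hm)
    · exact Or.inr (ih hw)

lemma pointersInBounds_of_mem_pphNodes {S : List α} {w : List (α ⊕ ℕ)}
    (hw : w ∈ pphNodes Sig S) : PointersInBounds w := by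
  induction S generalizing w with
  | nil => simp_all [pphNodes_nil, PointersInBounds]
  | cons c S ih =>
    rw [pphNodes_cons, Finset.mem_insert] at hw
    rcases hw with rfl | hw
    · exact (pointersInBounds_prevEnc Sig _).take _
    · exact ih hw

lemma prevEncTail_pphNewNode_mem (c : α) (S : List α)
    (hclosed : ∀ x ∈ pphNodes Sig S.tail, prevEncTail x ∈ pphNodes Sig S.tail) :
    prevEncTail (pphNewNode Sig c S) ∈ pphNodes Sig S := by
  rw [pphNewNode, prevEncTail_take, prevEncTail_prevEnc, List.tail_cons]
  cases S with
  | nil => exact take_mem_pphNodes Sig (nil_mem_pphNodes Sig []) _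
  | cons c' S =>
    set P := prevEnc Sig (c :: c' :: S)
    set ℓ := insLen (pphNodes Sig (c' :: S)) P
    set ℓ' := insLen (pphNodes Sig S) (prevEnc Sig (c' :: S))
    rcases le_or_gt (ℓ - 1) ℓ' with hle | hlt
    · have hprev : (prevEnc Sig (c' :: S)).take ℓ' ∈ pphNodes Sig (c' :: S) := by
        rw [pphNodes_cons]
        exact Finset.mem_insert_self _ _
      simpa [List.take_take, min_eq_left hle] using take_mem_pphNodes Sig hprev (ℓ - 1)
    · exfalso
      have hℓ : ℓ ≤ P.length := insLen_le _ _
      have hx : P.take (ℓ' + 1) ∈ pphNodes Sig (c' :: S) := take_mem_of_lt_insLen _ _ (by omega)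
      have hx_old : P.take (ℓ' + 1) ∈ pphNodes Sig S := by
        rw [pphNodes_cons, Finset.mem_insert] at hx
        refine hx.resolve_left fun h => ?_
        have := congrArg List.length h
        simp only [pphNewNode, List.length_take] at this
        omega
      have htail := hclosed _ hx_old
      rw [prevEncTail_take, prevEncTail_prevEnc, List.tail_cons, Nat.add_sub_cancel] at htail
      have hfull : prevEnc Sig (c' :: S) ∉ pphNodes Sig S := fun h => by
        simpa [prevEnc_length] using length_le_of_mem_pphNodes Sig h
      exact take_insLen_not_mem _ _ hfull htail

lemma prevEncTail_mem_pphNodes_tail {S : List α} {w : List (α ⊕ ℕ)} (hw : w ∈ pphNodes Sig S) :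
    prevEncTail w ∈ pphNodes Sig S.tail := by
  induction S generalizing w with
  | nil =>
    rw [pphNodes_nil, Finset.mem_singleton] at hw
    subst hw
    exact nil_mem_pphNodes Sig []
  | cons c S ih =>
    rw [pphNodes_cons, Finset.mem_insert] at hw
    rcases hw with rfl | hw
    · exact prevEncTail_pphNewNode_mem Sig c S fun x hx => ih (pphNodes_tail_subset Sig S hx)
    · exact pphNodes_tail_subset Sig S (ih hw)

end Heap

theorem stmt18_general (Sig : Set α) [DecidablePred (· ∈ Sig)] (T : List α)
    (j : ℕ) (v : List (α ⊕ ℕ)) (hvold : v ∉ pphNodes Sig (T.drop (j + 1))) :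
    ∀ a w, ¬ RSLink Sig (T.drop j).length (pphNodes Sig (T.drop j)) a v w := by
  intro a w hlink
  have htail := prevEncTail_mem_pphNodes_tail Sig hlink.2.1
  rw [List.tail_drop, hlink.prevEncTail_eq (pointersInBounds_of_mem_pphNodes Sig hlink.1)] at htail
  exact hvold htail

theorem stmt18 (Sig : Set α) [DecidablePred (· ∈ Sig)] (T : List α)
    (j : ℕ) (hj : j + 1 ≤ T.length) (v : List (α ⊕ ℕ))
    (hvnew : v ∈ pphNodes Sig (T.drop j)) (hvold : v ∉ pphNodes Sig (T.drop (j + 1))) :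
    ∀ a w, ¬ RSLink Sig (T.drop j).length (pphNodes Sig (T.drop j)) a v w :=
  stmt18_general Sig T j v hvold
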